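/- Let Y be a random variable with the Beta(p, p) distribution, p > 0. Then E[(1 - 2Y)^{2n}] = B(n + 1/2, p) / B(1/2, p) for all natural numbers n ≥ 1. -/

import Mathlib

open MeasureTheory ProbabilityTheory Real Set

noncomputable def B (a b : ℝ) : ℝ := Real.Gamma a * Real.Gamma b / Real.Gamma (a + b)

/-- The Beta(p, p) measure on ℝ, given by its density on (0, 1). -/
noncomputable def betaMeasurePP (p : ℝ) : Measure ℝ :=
  volume.withDensity fun y =>
    ENNReal.ofReal (Set.indicator (Set.Ioo (0 : ℝ) 1)
      (fun y => y ^ (p - 1) * (1 - y) ^ (p - 1) / B p p) y)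

/-!
With `t = 1 - 2y` one has `y (1 - y) = (1 - t²) / 4`, so the derivative of
`t^(k+1) (y (1 - y))^p` is `(y (1 - y))^(p-1)` times `((k+1)/2 + p) t^(k+2) - (k+1)/2 t^k`.
That primitive vanishes at `0` and `1`, hence the moments of `t` under Beta(p, p) satisfy
`((k+1)/2 + p) E[t^(k+2)] = (k+1)/2 E[t^k]`. By `Γ(x+1) = x Γ(x)` the ratio
`B(n + 1/2, p) / B(1/2, p)` obeys the same recurrence in `n`, and both sides equal `1` at `n = 0`.
-/

lemma B_pos {a b : ℝ} (ha : 0 < a) (hb : 0 < b) : 0 < B a b := beta_pos ha hb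

lemma B_add_one_left {x y : ℝ} (hx : x ≠ 0) (hxy : 0 < x + y) :
    B (x + 1) y * (x + y) = x * B x y := by
  have hΓ : Gamma (x + y) ≠ 0 := (Gamma_pos_of_pos hxy).ne'
  rw [B, B, Gamma_add_one hx, add_right_comm, Gamma_add_one hxy.ne']
  field_simp

lemma betaMeasurePP_eq_betaMeasure (p : ℝ) : betaMeasurePP p = betaMeasure p p := by
  unfold betaMeasurePP betaMeasure
  congr 1
  funext y
  simp only [betaPDF_eq, indicator_apply, mem_Ioo]
  split_ifs
  · rw [B, beta]; ring_nf
  · rfl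

lemma isProbabilityMeasure_betaMeasurePP {p : ℝ} (hp : 0 < p) :
    IsProbabilityMeasure (betaMeasurePP p) :=
  betaMeasurePP_eq_betaMeasure p ▸ isProbabilityMeasureBeta hp hp

noncomputable def betaWeight (p y : ℝ) : ℝ := y ^ (p - 1) * (1 - y) ^ (p - 1)

lemma betaWeight_nonneg (p : ℝ) {y : ℝ} (hy : y ∈ Ioo 0 1) : 0 ≤ betaWeight p y :=
  mul_nonneg (rpow_nonneg hy.1.le _) (rpow_nonneg (sub_nonneg.2 hy.2.le) _)

lemma integrableOn_betaWeight {p : ℝ} (hp : 0 < p) : IntegrableOn (betaWeight p) (Ioo 0 1) := by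
  have hnorm := lintegral_betaPDF_eq_one hp hp
  rw [lintegral_betaPDF] at hnorm
  have hpdf : IntegrableOn (fun y => 1 / beta p p * y ^ (p - 1) * (1 - y) ^ (p - 1)) (Ioo 0 1) := by
    refine ⟨by fun_prop, ?_⟩
    rw [hasFiniteIntegral_iff_ofReal, hnorm]
    · exact ENNReal.one_lt_top
    · filter_upwards [ae_restrict_mem measurableSet_Ioo] with y hy
      rw [mul_assoc]
      exact mul_nonneg (one_div_nonneg.2 (beta_pos hp hp).le) (betaWeight_nonneg p hy)
  convert hpdf.const_mul (beta p p) using 2 with y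
  field_simp [(beta_pos hp hp).ne']
  rfl

lemma integral_betaMeasurePP {p : ℝ} (hp : 0 < p) (g : ℝ → ℝ) :
    ∫ y, g y ∂betaMeasurePP p = (∫ y in Ioo 0 1, g y * betaWeight p y) / B p p := by
  rw [betaMeasurePP, integral_withDensity_eq_integral_toReal_smul
    ((Measurable.indicator (by fun_prop) measurableSet_Ioo).ennreal_ofReal)
    (Filter.Eventually.of_forall fun _ => ENNReal.ofReal_lt_top), ← integral_div,
    ← integral_indicator measurableSet_Ioo]
  congr 1
  funext y
  by_cases hy : y ∈ Ioo 0 1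
  · rw [indicator_of_mem hy, indicator_of_mem hy, ENNReal.toReal_ofReal, smul_eq_mul, betaWeight]
    · ring
    · exact div_nonneg (betaWeight_nonneg p hy) (B_pos hp hp).le
  · simp [indicator_of_notMem hy]

lemma hasDerivAt_one_sub_two_mul_pow_mul_rpow (p : ℝ) (k : ℕ) {y : ℝ} (hy : y ∈ Ioo 0 1) :
    HasDerivAt (fun y => (1 - 2 * y) ^ (k + 1) * (y ^ p * (1 - y) ^ p))
      (betaWeight p y * (((k + 1) / 2 + p) * (1 - 2 * y) ^ (k + 2) - (k + 1) / 2 * (1 - 2 * y) ^ k))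
      y := by
  have hy0 : y ≠ 0 := hy.1.ne'
  have hy1 : 1 - y ≠ 0 := sub_ne_zero.2 hy.2.ne'
  have hlin : HasDerivAt (fun y : ℝ => 1 - 2 * y) (-2) y := by
    simpa using ((hasDerivAt_id y).const_mul 2).const_sub 1
  have hpow := hlin.pow (k + 1)
  have hleft := (hasDerivAt_id y).rpow_const (p := p) (Or.inl hy0)
  have hright := ((hasDerivAt_id y).const_sub 1).rpow_const (p := p) (Or.inl hy1)
  refine (hpow.mul (hleft.mul hright)).congr_deriv ?_
  have e0 : y ^ p = y ^ (p - 1) * y := by rw [← rpow_add_one hy0]; ring_nf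
  have e1 : (1 - y) ^ p = (1 - y) ^ (p - 1) * (1 - y) := by rw [← rpow_add_one hy1]; ring_nf
  simp only [Pi.mul_apply, Pi.pow_apply, id, Nat.add_sub_cancel]
  rw [e0, e1, betaWeight]
  push_cast
  ring

lemma integrableOn_mul_betaWeight {p : ℝ} (hp : 0 < p) {g : ℝ → ℝ}
    (hg : ContinuousOn g (Icc 0 1)) :
    IntegrableOn (fun y => g y * betaWeight p y) (Ioo 0 1) :=
  (integrableOn_betaWeight hp).continuousOn_mul_of_subset hg isCompact_Icc measurableSet_Ioo
    Ioo_subset_Icc_self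

lemma betaMeasurePP_moment_recurrence {p : ℝ} (hp : 0 < p) (k : ℕ) :
    ((k + 1) / 2 + p) * ∫ y, (1 - 2 * y) ^ (k + 2) ∂betaMeasurePP p
      = (k + 1) / 2 * ∫ y, (1 - 2 * y) ^ k ∂betaMeasurePP p := by
  set F : ℝ → ℝ := fun y => (1 - 2 * y) ^ (k + 1) * (y ^ p * (1 - y) ^ p)
  set φ : ℝ → ℝ :=
    fun y => ((k + 1) / 2 + p) * (1 - 2 * y) ^ (k + 2) - (k + 1) / 2 * (1 - 2 * y) ^ k
  have hint : IntegrableOn (fun y => φ y * betaWeight p y) (Ioo 0 1) :=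
    integrableOn_mul_betaWeight hp (by fun_prop)
  have hFTC : ∫ y in (0 : ℝ)..1, betaWeight p y * φ y = F 1 - F 0 := by
    refine intervalIntegral.integral_eq_sub_of_hasDerivAt_of_le zero_le_one ?_
      (fun y hy => hasDerivAt_one_sub_two_mul_pow_mul_rpow p k hy) ?_
    · exact Continuous.continuousOn (by simp only [F]; fun_prop (disch := exact hp.le))
    · rw [intervalIntegrable_iff_integrableOn_Ioo_of_le zero_le_one]
      simpa only [mul_comm] using hint
  have hzero : ∫ y in Ioo 0 1, φ y * betaWeight p y = 0 := by
    rw [intervalIntegral.integral_of_le zero_le_one, integral_Ioc_eq_integral_Ioo] at hFTC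
    simpa [F, mul_comm, zero_rpow hp.ne'] using hFTC
  have hsplit : ∫ y in Ioo 0 1, φ y * betaWeight p y
      = ((k + 1) / 2 + p) * (∫ y in Ioo 0 1, (1 - 2 * y) ^ (k + 2) * betaWeight p y)
        - (k + 1) / 2 * ∫ y in Ioo 0 1, (1 - 2 * y) ^ k * betaWeight p y := by
    rw [← integral_const_mul, ← integral_const_mul, ← integral_sub
      ((integrableOn_mul_betaWeight hp (by fun_prop)).const_mul _)
      ((integrableOn_mul_betaWeight hp (by fun_prop)).const_mul _)]
    congr 1 with y
    ring
  rw [integral_betaMeasurePP hp, integral_betaMeasurePP hp, mul_div_assoc', mul_div_assoc']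
  congr 1
  linarith

lemma integral_one_sub_two_mul_pow_even_betaMeasurePP {p : ℝ} (hp : 0 < p) (n : ℕ) :
    ∫ y, (1 - 2 * y) ^ (2 * n) ∂betaMeasurePP p = B (n + 1 / 2) p / B (1 / 2) p := by
  have := isProbabilityMeasure_betaMeasurePP hp
  induction n with
  | zero =>
    rw [Nat.cast_zero, zero_add, div_self (B_pos one_half_pos hp).ne']
    simp
  | succ n ih =>
    have hrec := betaMeasurePP_moment_recurrence hp (2 * n)
    have hB := B_add_one_left (x := n + 1 / 2) (y := p) (by positivity) (by positivity)
    rw [show 2 * (n + 1) = 2 * n + 2 by ring,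
      ← mul_right_inj' (by positivity : (2 * n + 1) / 2 + p ≠ 0)]
    push_cast at hrec ⊢
    rw [hrec, ih, show (n : ℝ) + 1 + 1 / 2 = n + 1 / 2 + 1 by ring, ← mul_div_assoc,
      ← mul_div_assoc]
    congr 1
    linear_combination hB.symm

theorem stmt14_general {Ω : Type*} [MeasureSpace Ω] (μ : Measure Ω)
    (p : ℝ) (hp : 0 < p) (Y : Ω → ℝ) (hm : Measurable Y)
    (hY : Measure.map Y μ = betaMeasurePP p)
    (n : ℕ) :
    ∫ ω, (1 - 2 * Y ω) ^ (2 * n) ∂μ = B (n + 1 / 2) p / B (1 / 2) p := by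
  rw [← integral_one_sub_two_mul_pow_even_betaMeasurePP hp n, ← hY,
    integral_map hm.aemeasurable (by fun_prop)]

theorem stmt14 {Ω : Type*} [MeasureSpace Ω] (μ : Measure Ω) [IsProbabilityMeasure μ]
    (p : ℝ) (hp : 0 < p) (Y : Ω → ℝ) (hm : Measurable Y)
    (hY : Measure.map Y μ = betaMeasurePP p)
    (n : ℕ) (hn : 1 ≤ n) :
    ∫ ω, (1 - 2 * Y ω) ^ (2 * n) ∂μ = B (n + 1 / 2) p / B (1 / 2) p :=
  stmt14_general μ p hp Y hm hY n
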